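/- arXiv:2504.08350 — 2 statements merged into one kernel-verified Lean document; each statement's English description precedes it below -/
import Mathlib

section
/- Define the complex 4×4 matrices E₁ = [[0,−i,0,0],[i,0,0,0],[0,0,0,−i],[0,0,i,0]], E₂ = diag(−1,1,−1,1), E₃ = [[0,0,0,1],[0,0,1,0],[0,1,0,0],[1,0,0,0]], E₊ = [[0,1,0,0],[1,0,0,0],[0,0,0,−1],[0,0,−1,0]], E₋ = [[0,0,0,1],[0,0,1,0],[0,−1,0,0],[−1,0,0,0]]. These matrices satisfy the Clifford relations of signature (4,1) (E₁²=E₂²=E₃²=E₊²=I, E₋²=−I, and EᵢEⱼ = −EⱼEᵢ for distinct indices), so there is a unique ℝ-algebra homomorphism ρ : CGA → Mat₄(ℂ) with ρ(e₁)=E₁, ρ(e₂)=E₂, ρ(e₃)=E₃, ρ(e₊)=E₊, ρ(e₋)=E₋. For every element x = x₀ + x₁e₁ + x₂e₂ + x₃e₃ + x₊e₊ + x₋e₋ + x₁₂₃₊e₁₂₃₊ + x₁₂₃₋e₁₂₃₋ + x₁₂₊₋e₁₂₊₋ + x₁₃₊₋e₁₃₊₋ + x₂₃₊₋e₂₃₊₋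 + x₁₂₃₊₋e₁₂₃₊₋ with real coefficients (i.e. x of grades 0, 1, 4 and 5 only), one has det ρ(x) = (q − 2im)², where q = x₀² − x₁² − x₂² − x₃² − x₊² + x₋² − x₁₂₃₊² + x₁₂₃₋² + x₁₂₊₋² + x₁₃₊₋² + x₂₃₊₋² − x₁₂₃₊₋² and m = x₀x₁₂₃₊₋ − x₁x₂₃₊₋ + x₂x₁₃₊₋ − x₃x₁₂₊₋ + x₊x₁₂₃₋ − x₋x₁₂₃₊. Moreover det ρ(x) = 0 if and only if q = 0 and m = 0. -/
open Polynomial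

/-- The quadratic form of signature (4,1) on ℝ⁵ defining conformal geometric algebra. -/
noncomputable def Qcga : QuadraticForm ℝ (Fin 5 → ℝ) :=
  QuadraticMap.weightedSumSquares ℝ (fun i : Fin 5 => if (i : ℕ) = 4 then (-1 : ℝ) else 1)

/-- Conformal geometric algebra CGA = Cl(4,1). -/
abbrev CGA := CliffordAlgebra Qcga

/-- The generators e₁, e₂, e₃, e₊, e₋ of CGA (indexed 0,…,4). -/
noncomputable def eCGA (i : Fin 5) : CGA := CliffordAlgebra.ι Qcga (Pi.single i 1)
open Complex Matrix

/-- The matrices `E₁, E₂, E₃, E₊, E₋` (indexed 0,…,4). -/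
noncomputable def Emat : Fin 5 → Matrix (Fin 4) (Fin 4) ℂ
  | 0 => !![0, -I, 0, 0; I, 0, 0, 0; 0, 0, 0, -I; 0, 0, I, 0]
  | 1 => !![-1, 0, 0, 0; 0, 1, 0, 0; 0, 0, -1, 0; 0, 0, 0, 1]
  | 2 => !![0, 0, 0, 1; 0, 0, 1, 0; 0, 1, 0, 0; 1, 0, 0, 0]
  | 3 => !![0, 1, 0, 0; 1, 0, 0, 0; 0, 0, 0, -1; 0, 0, -1, 0]
  | 4 => !![0, 0, 0, 1; 0, 0, 1, 0; 0, -1, 0, 0; -1, 0, 0, 0]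

/-- The general element of CGA of grades 0, 1, 4 and 5:
`x = x₀ + x₁e₁ + x₂e₂ + x₃e₃ + xp·e₊ + xm·e₋ + y₁·e₁₂₃₊ + y₂·e₁₂₃₋ + y₃·e₁₂₊₋
+ y₄·e₁₃₊₋ + y₅·e₂₃₊₋ + z·e₁₂₃₊₋`. -/
noncomputable def xElem (x₀ x₁ x₂ x₃ xp xm y₁ y₂ y₃ y₄ y₅ z : ℝ) : CGA :=
  algebraMap ℝ CGA x₀ + x₁ • eCGA 0 + x₂ • eCGA 1 + x₃ • eCGA 2 + xp • eCGA 3 + xm • eCGA 4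
    + y₁ • (eCGA 0 * eCGA 1 * eCGA 2 * eCGA 3)
    + y₂ • (eCGA 0 * eCGA 1 * eCGA 2 * eCGA 4)
    + y₃ • (eCGA 0 * eCGA 1 * eCGA 3 * eCGA 4)
    + y₄ • (eCGA 0 * eCGA 2 * eCGA 3 * eCGA 4)
    + y₅ • (eCGA 1 * eCGA 2 * eCGA 3 * eCGA 4)
    + z • (eCGA 0 * eCGA 1 * eCGA 2 * eCGA 3 * eCGA 4)

/-- The quantity `q = x₀² − x₁² − x₂² − x₃² − x₊² + x₋² − x₁₂₃₊² + x₁₂₃₋² + x₁₂₊₋²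
+ x₁₃₊₋² + x₂₃₊₋² − x₁₂₃₊₋²`. -/
def qVal (x₀ x₁ x₂ x₃ xp xm y₁ y₂ y₃ y₄ y₅ z : ℝ) : ℝ :=
  x₀ ^ 2 - x₁ ^ 2 - x₂ ^ 2 - x₃ ^ 2 - xp ^ 2 + xm ^ 2
    - y₁ ^ 2 + y₂ ^ 2 + y₃ ^ 2 + y₄ ^ 2 + y₅ ^ 2 - z ^ 2

/-- The quantity `m = x₀x₁₂₃₊₋ − x₁x₂₃₊₋ + x₂x₁₃₊₋ − x₃x₁₂₊₋ + x₊x₁₂₃₋ − x₋x₁₂₃₊`. -/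
def mVal (x₀ x₁ x₂ x₃ xp xm y₁ y₂ y₃ y₄ y₅ z : ℝ) : ℝ :=
  x₀ * z - x₁ * y₅ + x₂ * y₄ - x₃ * y₃ + xp * y₂ - xm * y₁


set_option maxHeartbeats 1600000

theorem mul_fin_four {α} [AddCommMonoid α] [Mul α]
    (a₁₁ a₁₂ a₁₃ a₁₄ a₂₁ a₂₂ a₂₃ a₂₄ a₃₁ a₃₂ a₃₃ a₃₄ a₄₁ a₄₂ a₄₃ a₄₄
     b₁₁ b₁₂ b₁₃ b₁₄ b₂₁ b₂₂ b₂₃ b₂₄ b₃₁ b₃₂ b₃₃ b₃₄ b₄₁ b₄₂ b₄₃ b₄₄ : α) :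
    !![a₁₁, a₁₂, a₁₃, a₁₄; a₂₁, a₂₂, a₂₃, a₂₄; a₃₁, a₃₂, a₃₃, a₃₄; a₄₁, a₄₂, a₄₃, a₄₄] *
    !![b₁₁, b₁₂, b₁₃, b₁₄; b₂₁, b₂₂, b₂₃, b₂₄; b₃₁, b₃₂, b₃₃, b₃₄; b₄₁, b₄₂, b₄₃, b₄₄] =
    !![a₁₁*b₁₁ + a₁₂*b₂₁ + a₁₃*b₃₁ + a₁₄*b₄₁, a₁₁*b₁₂ + a₁₂*b₂₂ + a₁₃*b₃₂ + a₁₄*b₄₂,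
       a₁₁*b₁₃ + a₁₂*b₂₃ + a₁₃*b₃₃ + a₁₄*b₄₃, a₁₁*b₁₄ + a₁₂*b₂₄ + a₁₃*b₃₄ + a₁₄*b₄₄;
       a₂₁*b₁₁ + a₂₂*b₂₁ + a₂₃*b₃₁ + a₂₄*b₄₁, a₂₁*b₁₂ + a₂₂*b₂₂ + a₂₃*b₃₂ + a₂₄*b₄₂,
       a₂₁*b₁₃ + a₂₂*b₂₃ + a₂₃*b₃₃ + a₂₄*b₄₃, a₂₁*b₁₄ + a₂₂*b₂₄ + a₂₃*b₃₄ + a₂₄*b₄₄;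
       a₃₁*b₁₁ + a₃₂*b₂₁ + a₃₃*b₃₁ + a₃₄*b₄₁, a₃₁*b₁₂ + a₃₂*b₂₂ + a₃₃*b₃₂ + a₃₄*b₄₂,
       a₃₁*b₁₃ + a₃₂*b₂₃ + a₃₃*b₃₃ + a₃₄*b₄₃, a₃₁*b₁₄ + a₃₂*b₂₄ + a₃₃*b₃₄ + a₃₄*b₄₄;
       a₄₁*b₁₁ + a₄₂*b₂₁ + a₄₃*b₃₁ + a₄₄*b₄₁, a₄₁*b₁₂ + a₄₂*b₂₂ + a₄₃*b₃₂ + a₄₄*b₄₂,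
       a₄₁*b₁₃ + a₄₂*b₂₃ + a₄₃*b₃₃ + a₄₄*b₄₃, a₄₁*b₁₄ + a₄₂*b₂₄ + a₄₃*b₃₄ + a₄₄*b₄₄] := by
  ext i j
  fin_cases i <;> fin_cases j
    <;> simp [Matrix.mul_apply, dotProduct, Fin.sum_univ_succ, ← add_assoc]

lemma mat4_eq {α : Type*} {a11 a12 a13 a14 a21 a22 a23 a24 a31 a32 a33 a34 a41 a42 a43 a44 b11 b12 b13 b14 b21 b22 b23 b24 b31 b32 b33 b34 b41 b42 b43 b44 : α}
    (h11 : a11 = b11) (h12 : a12 = b12) (h13 : a13 = b13) (h14 : a14 = b14) (h21 : a21 = b21) (h22 : a22 = b22) (h23 : a23 = b23) (h24 : a24 = b24) (h31 : a31 = b31) (h32 : a32 = b32) (h33 : a33 = b33) (h34 : a34 = b34) (h41 : a41 = b41) (h42 : a42 = b42) (h43 : a43 = b43) (h44 : a44 = b44) :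
    !![a11, a12, a13, a14; a21, a22, a23, a24; a31, a32, a33, a34; a41, a42, a43, a44] = !![b11, b12, b13, b14; b21, b22, b23, b24; b31, b32, b33, b34; b41, b42, b43, b44] := by subst_vars; rfl


lemma one_fin_four : (1 : Matrix (Fin 4) (Fin 4) ℂ) = !![1,0,0,0; 0,1,0,0; 0,0,1,0; 0,0,0,1] := by
  ext i j
  fin_cases i <;> fin_cases j <;>
    simp [Matrix.one_apply, Matrix.vecHead, Matrix.vecTail]

lemma neg_one_fin_four :
    (-1 : Matrix (Fin 4) (Fin 4) ℂ) = !![-1,0,0,0; 0,-1,0,0; 0,0,-1,0; 0,0,0,-1] := by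
  ext i j
  fin_cases i <;> fin_cases j <;>
    simp [Matrix.one_apply, Matrix.vecHead, Matrix.vecTail]

lemma neg_mat_fin_four (a b c d e f g h i' j k l m n o p : ℂ) :
    -!![a,b,c,d; e,f,g,h; i',j,k,l; m,n,o,p] =
    !![-a,-b,-c,-d; -e,-f,-g,-h; -i',-j,-k,-l; -m,-n,-o,-p] := by
  ext x y
  fin_cases x <;> fin_cases y <;> simp [Matrix.vecHead, Matrix.vecTail]

lemma algebraMap_fin_four (r : ℝ) : algebraMap ℝ (Matrix (Fin 4) (Fin 4) ℂ) r =
    !![(r:ℂ),0,0,0; 0,(r:ℂ),0,0; 0,0,(r:ℂ),0; 0,0,0,(r:ℂ)] := by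
  ext i j
  fin_cases i <;> fin_cases j <;>
    simp [Matrix.algebraMap_matrix_apply, Matrix.vecHead, Matrix.vecTail]

lemma smul_mat_fin_four (r : ℝ) (a b c d e f g h i' j k l m n o p : ℂ) :
    r • !![a,b,c,d; e,f,g,h; i',j,k,l; m,n,o,p] =
    !![r*a,r*b,r*c,r*d; r*e,r*f,r*g,r*h; r*i',r*j,r*k,r*l; r*m,r*n,r*o,r*p] := by
  ext x y
  fin_cases x <;> fin_cases y <;>
    simp [Complex.real_smul, Matrix.vecHead, Matrix.vecTail]

lemma add_mat_fin_four (a b c d e f g h i' j k l m n o p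
    a' b' c' d' e' f' g' h' i'' j' k' l' m' n' o' p' : ℂ) :
    !![a,b,c,d; e,f,g,h; i',j,k,l; m,n,o,p] +
    !![a',b',c',d'; e',f',g',h'; i'',j',k',l'; m',n',o',p'] =
    !![a+a',b+b',c+c',d+d'; e+e',f+f',g+g',h+h'; i'+i'',j+j',k+k',l+l'; m+m',n+n',o+o',p+p'] := by
  ext x y
  fin_cases x <;> fin_cases y <;> simp [Matrix.vecHead, Matrix.vecTail]

lemma EmatE0 : Emat 0 = !![(0), (-I), (0), (0); I, (0), (0), (0); (0), (0), (0), (-I); (0), (0), I, (0)] := by norm_num [Emat]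
lemma EmatE1 : Emat 1 = !![(-1), (0), (0), (0); (0), (1), (0), (0); (0), (0), (-1), (0); (0), (0), (0), (1)] := by norm_num [Emat]
lemma EmatE2 : Emat 2 = !![(0), (0), (0), (1); (0), (0), (1), (0); (0), (1), (0), (0); (1), (0), (0), (0)] := by norm_num [Emat]
lemma EmatE3 : Emat 3 = !![(0), (1), (0), (0); (1), (0), (0), (0); (0), (0), (0), (-1); (0), (0), (-1), (0)] := by norm_num [Emat]
lemma EmatE4 : Emat 4 = !![(0), (0), (0), (1); (0), (0), (1), (0); (0), (-1), (0), (0); (-1), (0), (0), (0)] := by norm_num [Emat]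
lemma P01 : Emat 0 * Emat 1 = !![(0), (-I), (0), (0); (-I), (0), (0), (0); (0), (0), (0), (-I); (0), (0), (-I), (0)] := by rw [EmatE0, EmatE1, mul_fin_four]; norm_num
lemma P012 : Emat 0 * Emat 1 * Emat 2 = !![(0), (0), (-I), (0); (0), (0), (0), (-I); (-I), (0), (0), (0); (0), (-I), (0), (0)] := by rw [P01, EmatE2, mul_fin_four]; norm_num
lemma P0123 : Emat 0 * Emat 1 * Emat 2 * Emat 3 = !![(0), (0), (0), I; (0), (0), I, (0); (0), (-I), (0), (0); (-I), (0), (0), (0)] := by rw [P012, EmatE3, mul_fin_four]; norm_num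
lemma P0124 : Emat 0 * Emat 1 * Emat 2 * Emat 4 = !![(0), I, (0), (0); I, (0), (0), (0); (0), (0), (0), (-I); (0), (0), (-I), (0)] := by rw [P012, EmatE4, mul_fin_four]; norm_num
lemma P013 : Emat 0 * Emat 1 * Emat 3 = !![(-I), (0), (0), (0); (0), (-I), (0), (0); (0), (0), I, (0); (0), (0), (0), I] := by rw [P01, EmatE3, mul_fin_four]; norm_num
lemma P0134 : Emat 0 * Emat 1 * Emat 3 * Emat 4 = !![(0), (0), (0), (-I); (0), (0), (-I), (0); (0), (-I), (0), (0); (-I), (0), (0), (0)] := by rw [P013, EmatE4, mul_fin_four]; norm_num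
lemma P02 : Emat 0 * Emat 2 = !![(0), (0), (-I), (0); (0), (0), (0), I; (-I), (0), (0), (0); (0), I, (0), (0)] := by rw [EmatE0, EmatE2, mul_fin_four]; norm_num
lemma P023 : Emat 0 * Emat 2 * Emat 3 = !![(0), (0), (0), I; (0), (0), (-I), (0); (0), (-I), (0), (0); I, (0), (0), (0)] := by rw [P02, EmatE3, mul_fin_four]; norm_num
lemma P0234 : Emat 0 * Emat 2 * Emat 3 * Emat 4 = !![(-I), (0), (0), (0); (0), I, (0), (0); (0), (0), (-I), (0); (0), (0), (0), I] := by rw [P023, EmatE4, mul_fin_four]; norm_num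
lemma P12 : Emat 1 * Emat 2 = !![(0), (0), (0), (-1); (0), (0), (1), (0); (0), (-1), (0), (0); (1), (0), (0), (0)] := by rw [EmatE1, EmatE2, mul_fin_four]; norm_num
lemma P123 : Emat 1 * Emat 2 * Emat 3 = !![(0), (0), (1), (0); (0), (0), (0), (-1); (-1), (0), (0), (0); (0), (1), (0), (0)] := by rw [P12, EmatE3, mul_fin_four]; norm_num
lemma P1234 : Emat 1 * Emat 2 * Emat 3 * Emat 4 = !![(0), (-1), (0), (0); (1), (0), (0), (0); (0), (0), (0), (-1); (0), (0), (1), (0)] := by rw [P123, EmatE4, mul_fin_four]; norm_num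
lemma P01234 : Emat 0 * Emat 1 * Emat 2 * Emat 3 * Emat 4 = !![(-I), (0), (0), (0); (0), (-I), (0), (0); (0), (0), (-I), (0); (0), (0), (0), (-I)] := by rw [P0123, EmatE4, mul_fin_four]; norm_num

lemma Q01 : Emat 0 * Emat 1 = !![(0), (-I), (0), (0); (-I), (0), (0), (0); (0), (0), (0), (-I); (0), (0), (-I), (0)] := by rw [EmatE0, EmatE1, mul_fin_four]; norm_num
lemma Q02 : Emat 0 * Emat 2 = !![(0), (0), (-I), (0); (0), (0), (0), I; (-I), (0), (0), (0); (0), I, (0), (0)] := by rw [EmatE0, EmatE2, mul_fin_four]; norm_num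
lemma Q03 : Emat 0 * Emat 3 = !![(-I), (0), (0), (0); (0), I, (0), (0); (0), (0), I, (0); (0), (0), (0), (-I)] := by rw [EmatE0, EmatE3, mul_fin_four]; norm_num
lemma Q04 : Emat 0 * Emat 4 = !![(0), (0), (-I), (0); (0), (0), (0), I; I, (0), (0), (0); (0), (-I), (0), (0)] := by rw [EmatE0, EmatE4, mul_fin_four]; norm_num
lemma Q10 : Emat 1 * Emat 0 = !![(0), I, (0), (0); I, (0), (0), (0); (0), (0), (0), I; (0), (0), I, (0)] := by rw [EmatE1, EmatE0, mul_fin_four]; norm_num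
lemma Q12 : Emat 1 * Emat 2 = !![(0), (0), (0), (-1); (0), (0), (1), (0); (0), (-1), (0), (0); (1), (0), (0), (0)] := by rw [EmatE1, EmatE2, mul_fin_four]; norm_num
lemma Q13 : Emat 1 * Emat 3 = !![(0), (-1), (0), (0); (1), (0), (0), (0); (0), (0), (0), (1); (0), (0), (-1), (0)] := by rw [EmatE1, EmatE3, mul_fin_four]; norm_num
lemma Q14 : Emat 1 * Emat 4 = !![(0), (0), (0), (-1); (0), (0), (1), (0); (0), (1), (0), (0); (-1), (0), (0), (0)] := by rw [EmatE1, EmatE4, mul_fin_four]; norm_num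
lemma Q20 : Emat 2 * Emat 0 = !![(0), (0), I, (0); (0), (0), (0), (-I); I, (0), (0), (0); (0), (-I), (0), (0)] := by rw [EmatE2, EmatE0, mul_fin_four]; norm_num
lemma Q21 : Emat 2 * Emat 1 = !![(0), (0), (0), (1); (0), (0), (-1), (0); (0), (1), (0), (0); (-1), (0), (0), (0)] := by rw [EmatE2, EmatE1, mul_fin_four]; norm_num
lemma Q23 : Emat 2 * Emat 3 = !![(0), (0), (-1), (0); (0), (0), (0), (-1); (1), (0), (0), (0); (0), (1), (0), (0)] := by rw [EmatE2, EmatE3, mul_fin_four]; norm_num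
lemma Q24 : Emat 2 * Emat 4 = !![(-1), (0), (0), (0); (0), (-1), (0), (0); (0), (0), (1), (0); (0), (0), (0), (1)] := by rw [EmatE2, EmatE4, mul_fin_four]; norm_num
lemma Q30 : Emat 3 * Emat 0 = !![I, (0), (0), (0); (0), (-I), (0), (0); (0), (0), (-I), (0); (0), (0), (0), I] := by rw [EmatE3, EmatE0, mul_fin_four]; norm_num
lemma Q31 : Emat 3 * Emat 1 = !![(0), (1), (0), (0); (-1), (0), (0), (0); (0), (0), (0), (-1); (0), (0), (1), (0)] := by rw [EmatE3, EmatE1, mul_fin_four]; norm_num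
lemma Q32 : Emat 3 * Emat 2 = !![(0), (0), (1), (0); (0), (0), (0), (1); (-1), (0), (0), (0); (0), (-1), (0), (0)] := by rw [EmatE3, EmatE2, mul_fin_four]; norm_num
lemma Q34 : Emat 3 * Emat 4 = !![(0), (0), (1), (0); (0), (0), (0), (1); (1), (0), (0), (0); (0), (1), (0), (0)] := by rw [EmatE3, EmatE4, mul_fin_four]; norm_num
lemma Q40 : Emat 4 * Emat 0 = !![(0), (0), I, (0); (0), (0), (0), (-I); (-I), (0), (0), (0); (0), I, (0), (0)] := by rw [EmatE4, EmatE0, mul_fin_four]; norm_num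
lemma Q41 : Emat 4 * Emat 1 = !![(0), (0), (0), (1); (0), (0), (-1), (0); (0), (-1), (0), (0); (1), (0), (0), (0)] := by rw [EmatE4, EmatE1, mul_fin_four]; norm_num
lemma Q42 : Emat 4 * Emat 2 = !![(1), (0), (0), (0); (0), (1), (0), (0); (0), (0), (-1), (0); (0), (0), (0), (-1)] := by rw [EmatE4, EmatE2, mul_fin_four]; norm_num
lemma Q43 : Emat 4 * Emat 3 = !![(0), (0), (-1), (0); (0), (0), (0), (-1); (-1), (0), (0), (0); (0), (-1), (0), (0)] := by rw [EmatE4, EmatE3, mul_fin_four]; norm_num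
lemma Esq0 : Emat 0 * Emat 0 = !![(1), (0), (0), (0); (0), (1), (0), (0); (0), (0), (1), (0); (0), (0), (0), (1)] := by rw [EmatE0, mul_fin_four]; norm_num
lemma Esq1 : Emat 1 * Emat 1 = !![(1), (0), (0), (0); (0), (1), (0), (0); (0), (0), (1), (0); (0), (0), (0), (1)] := by rw [EmatE1, mul_fin_four]; norm_num
lemma Esq2 : Emat 2 * Emat 2 = !![(1), (0), (0), (0); (0), (1), (0), (0); (0), (0), (1), (0); (0), (0), (0), (1)] := by rw [EmatE2, mul_fin_four]; norm_num
lemma Esq3 : Emat 3 * Emat 3 = !![(1), (0), (0), (0); (0), (1), (0), (0); (0), (0), (1), (0); (0), (0), (0), (1)] := by rw [EmatE3, mul_fin_four]; norm_num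
lemma Esq4 : Emat 4 * Emat 4 = !![(-1), (0), (0), (0); (0), (-1), (0), (0); (0), (0), (-1), (0); (0), (0), (0), (-1)] := by rw [EmatE4, mul_fin_four]; norm_num

lemma A01 : Emat 0 * Emat 1 = -(Emat 1 * Emat 0) := by rw [Q01, Q10, neg_mat_fin_four]; norm_num
lemma A02 : Emat 0 * Emat 2 = -(Emat 2 * Emat 0) := by rw [Q02, Q20, neg_mat_fin_four]; norm_num
lemma A03 : Emat 0 * Emat 3 = -(Emat 3 * Emat 0) := by rw [Q03, Q30, neg_mat_fin_four]; norm_num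
lemma A04 : Emat 0 * Emat 4 = -(Emat 4 * Emat 0) := by rw [Q04, Q40, neg_mat_fin_four]; norm_num
lemma A10 : Emat 1 * Emat 0 = -(Emat 0 * Emat 1) := by rw [Q10, Q01, neg_mat_fin_four]; norm_num
lemma A12 : Emat 1 * Emat 2 = -(Emat 2 * Emat 1) := by rw [Q12, Q21, neg_mat_fin_four]; norm_num
lemma A13 : Emat 1 * Emat 3 = -(Emat 3 * Emat 1) := by rw [Q13, Q31, neg_mat_fin_four]; norm_num
lemma A14 : Emat 1 * Emat 4 = -(Emat 4 * Emat 1) := by rw [Q14, Q41, neg_mat_fin_four]; norm_num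
lemma A20 : Emat 2 * Emat 0 = -(Emat 0 * Emat 2) := by rw [Q20, Q02, neg_mat_fin_four]; norm_num
lemma A21 : Emat 2 * Emat 1 = -(Emat 1 * Emat 2) := by rw [Q21, Q12, neg_mat_fin_four]; norm_num
lemma A23 : Emat 2 * Emat 3 = -(Emat 3 * Emat 2) := by rw [Q23, Q32, neg_mat_fin_four]; norm_num
lemma A24 : Emat 2 * Emat 4 = -(Emat 4 * Emat 2) := by rw [Q24, Q42, neg_mat_fin_four]; norm_num
lemma A30 : Emat 3 * Emat 0 = -(Emat 0 * Emat 3) := by rw [Q30, Q03, neg_mat_fin_four]; norm_num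
lemma A31 : Emat 3 * Emat 1 = -(Emat 1 * Emat 3) := by rw [Q31, Q13, neg_mat_fin_four]; norm_num
lemma A32 : Emat 3 * Emat 2 = -(Emat 2 * Emat 3) := by rw [Q32, Q23, neg_mat_fin_four]; norm_num
lemma A34 : Emat 3 * Emat 4 = -(Emat 4 * Emat 3) := by rw [Q34, Q43, neg_mat_fin_four]; norm_num
lemma A40 : Emat 4 * Emat 0 = -(Emat 0 * Emat 4) := by rw [Q40, Q04, neg_mat_fin_four]; norm_num
lemma A41 : Emat 4 * Emat 1 = -(Emat 1 * Emat 4) := by rw [Q41, Q14, neg_mat_fin_four]; norm_num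
lemma A42 : Emat 4 * Emat 2 = -(Emat 2 * Emat 4) := by rw [Q42, Q24, neg_mat_fin_four]; norm_num
lemma A43 : Emat 4 * Emat 3 = -(Emat 3 * Emat 4) := by rw [Q43, Q34, neg_mat_fin_four]; norm_num



lemma det4 (a b c d e f g h i' j k l m n o p : ℂ) :
    (!![a,b,c,d; e,f,g,h; i',j,k,l; m,n,o,p] : Matrix (Fin 4) (Fin 4) ℂ).det =
      a*(f*(k*p-l*o) - g*(j*p-l*n) + h*(j*o-k*n))
    - b*(e*(k*p-l*o) - g*(i'*p-l*m) + h*(i'*o-k*m))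
    + c*(e*(j*p-l*n) - f*(i'*p-l*m) + h*(i'*n-j*m))
    - d*(e*(j*o-k*n) - f*(i'*o-k*m) + g*(i'*n-j*m)) := by
  rw [Matrix.det_succ_row_zero]
  simp [Fin.sum_univ_succ, Matrix.det_fin_three, Matrix.submatrix, Matrix.vecHead, Matrix.vecTail,
    show (Fin.succAbove 1 2 : Fin 4) = 3 from rfl, show (Fin.succAbove 2 2 : Fin 4) = 3 from rfl,
    show (Fin.castSucc 2 : Fin 4) = 2 from rfl, show (Fin.succAbove 3 2 : Fin 4) = 2 from rfl]
  ring

lemma Qcga_apply (v : Fin 5 → ℝ) :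
    Qcga v = v 0 * v 0 + v 1 * v 1 + v 2 * v 2 + v 3 * v 3 - v 4 * v 4 := by
  simp [Qcga, QuadraticMap.weightedSumSquares_apply, Fin.sum_univ_five,
    show ((3:Fin 5):ℕ) = 3 from rfl, show ((4:Fin 5):ℕ) = 4 from rfl,
    show ((0:Fin 5):ℕ) = 0 from rfl, show ((1:Fin 5):ℕ) = 1 from rfl,
    show ((2:Fin 5):ℕ) = 2 from rfl]
  ring

noncomputable def fLin : (Fin 5 → ℝ) →ₗ[ℝ] Matrix (Fin 4) (Fin 4) ℂ :=
  ∑ i, (LinearMap.proj i).smulRight (Emat i)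

lemma fLin_apply (v : Fin 5 → ℝ) : fLin v = ∑ i, v i • Emat i := by
  simp [fLin]

lemma fLin_single (i : Fin 5) : fLin (Pi.single i 1) = Emat i := by
  simp [fLin_apply, Pi.single_apply, ite_smul, Finset.sum_ite_eq']

lemma fLin_eq (v : Fin 5 → ℝ) : fLin v =
    !![-(v 1 : ℂ), -I*(v 0 : ℂ) + (v 3 : ℂ), 0, (v 2 : ℂ) + (v 4 : ℂ);
       I*(v 0 : ℂ) + (v 3 : ℂ), (v 1 : ℂ), (v 2 : ℂ) + (v 4 : ℂ), 0;
       0, (v 2 : ℂ) - (v 4 : ℂ), -(v 1 : ℂ), -I*(v 0 : ℂ) - (v 3 : ℂ);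
       (v 2 : ℂ) - (v 4 : ℂ), 0, I*(v 0 : ℂ) - (v 3 : ℂ), (v 1 : ℂ)] := by
  rw [fLin_apply, Fin.sum_univ_five, EmatE0, EmatE1, EmatE2, EmatE3, EmatE4]
  repeat rw [smul_mat_fin_four]
  repeat rw [add_mat_fin_four]
  apply mat4_eq <;> push_cast <;> ring

lemma fLin_sq (v : Fin 5 → ℝ) :
    fLin v * fLin v = algebraMap ℝ (Matrix (Fin 4) (Fin 4) ℂ) (Qcga v) := by
  rw [fLin_eq, mul_fin_four, Qcga_apply, algebraMap_fin_four]
  apply mat4_eq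
  all_goals push_cast
  all_goals try ring
  all_goals linear_combination (-(v 0 : ℂ) * (v 0 : ℂ)) * Complex.I_sq

noncomputable def ρ₀ : CGA →ₐ[ℝ] Matrix (Fin 4) (Fin 4) ℂ :=
  CliffordAlgebra.lift Qcga ⟨fLin, fLin_sq⟩

lemma ρ₀_eCGA (i : Fin 5) : ρ₀ (eCGA i) = Emat i := by
  rw [eCGA, ρ₀, CliffordAlgebra.lift_ι_apply, fLin_single]

lemma vec_decomp (v : Fin 5 → ℝ) : v = ∑ i, v i • (Pi.single i 1 : Fin 5 → ℝ) := by
  ext j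
  simp [Finset.sum_apply, Pi.single_apply]

lemma iota_eq (v : Fin 5 → ℝ) : CliffordAlgebra.ι Qcga v = ∑ i, v i • eCGA i := by
  conv_lhs => rw [vec_decomp v]
  rw [map_sum]
  simp [eCGA]

/-- the matrices `Emat i` satisfy the Clifford relations of signature (4,1),
there is a unique ℝ-algebra homomorphism `ρ : CGA → Mat₄(ℂ)` sending the generators to
them, and for every such `ρ` and every element `x` of grades 0, 1, 4 and 5 one has
`det ρ(x) = (q − 2im)²`, and `det ρ(x) = 0` iff `q = 0` and `m = 0`. -/
theorem stmt4 :
    (∀ i : Fin 5, Emat i * Emat i = if (i : ℕ) = 4 then -1 else 1) ∧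
    (∀ i j : Fin 5, i ≠ j → Emat i * Emat j = -(Emat j * Emat i)) ∧
    (∃! ρ : CGA →ₐ[ℝ] Matrix (Fin 4) (Fin 4) ℂ, ∀ i : Fin 5, ρ (eCGA i) = Emat i) ∧
    (∀ ρ : CGA →ₐ[ℝ] Matrix (Fin 4) (Fin 4) ℂ, (∀ i : Fin 5, ρ (eCGA i) = Emat i) →
      ∀ x₀ x₁ x₂ x₃ xp xm y₁ y₂ y₃ y₄ y₅ z : ℝ,
        ((ρ (xElem x₀ x₁ x₂ x₃ xp xm y₁ y₂ y₃ y₄ y₅ z)).det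
          = (((qVal x₀ x₁ x₂ x₃ xp xm y₁ y₂ y₃ y₄ y₅ z : ℝ) : ℂ)
            - 2 * I * ((mVal x₀ x₁ x₂ x₃ xp xm y₁ y₂ y₃ y₄ y₅ z : ℝ) : ℂ)) ^ 2) ∧
        ((ρ (xElem x₀ x₁ x₂ x₃ xp xm y₁ y₂ y₃ y₄ y₅ z)).det = 0 ↔
          qVal x₀ x₁ x₂ x₃ xp xm y₁ y₂ y₃ y₄ y₅ z = 0 ∧
            mVal x₀ x₁ x₂ x₃ xp xm y₁ y₂ y₃ y₄ y₅ z = 0)) := by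
  refine ⟨?_, ?_, ?_, ?_⟩
  · intro i
    fin_cases i <;> simp [Esq0, Esq1, Esq2, Esq3, Esq4, one_fin_four, neg_one_fin_four]
  · intro i j hij
    fin_cases i <;> fin_cases j
    · exact absurd rfl hij
    · exact A01
    · exact A02
    · exact A03
    · exact A04
    · exact A10
    · exact absurd rfl hij
    · exact A12
    · exact A13
    · exact A14
    · exact A20
    · exact A21
    · exact absurd rfl hij
    · exact A23
    · exact A24
    · exact A30
    · exact A31
    · exact A32
    · exact absurd rfl hij
    · exact A34
    · exact A40
    · exact A41
    · exact A42
    · exact A43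
    · exact absurd rfl hij
  · exact ⟨ρ₀, ρ₀_eCGA, fun ρ' h' => by
      apply CliffordAlgebra.hom_ext
      apply LinearMap.ext
      intro v
      simp only [LinearMap.comp_apply, AlgHom.toLinearMap_apply, iota_eq, map_sum]
      refine Finset.sum_congr rfl fun i _ => ?_
      rw [_root_.map_smul, _root_.map_smul, h' i, ρ₀_eCGA i]⟩
  · intro ρ hρ x₀ x₁ x₂ x₃ xp xm y₁ y₂ y₃ y₄ y₅ z
    have hM : ρ (xElem x₀ x₁ x₂ x₃ xp xm y₁ y₂ y₃ y₄ y₅ z) =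
        !![(1)*(x₀:ℂ) + (-1)*(x₂:ℂ) + (-1)*(y₄:ℂ)*I + (-1)*(z:ℂ)*I, (-1)*(x₁:ℂ)*I + (1)*(xp:ℂ) + (1)*(y₂:ℂ)*I + (-1)*(y₅:ℂ), 0, (1)*(x₃:ℂ) + (1)*(xm:ℂ) + (1)*(y₁:ℂ)*I + (-1)*(y₃:ℂ)*I;
    (1)*(x₁:ℂ)*I + (1)*(xp:ℂ) + (1)*(y₂:ℂ)*I + (1)*(y₅:ℂ), (1)*(x₀:ℂ) + (1)*(x₂:ℂ) + (1)*(y₄:ℂ)*I + (-1)*(z:ℂ)*I, (1)*(x₃:ℂ) + (1)*(xm:ℂ) + (1)*(y₁:ℂ)*I + (-1)*(y₃:ℂ)*I, 0;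
    0, (1)*(x₃:ℂ) + (-1)*(xm:ℂ) + (-1)*(y₁:ℂ)*I + (-1)*(y₃:ℂ)*I, (1)*(x₀:ℂ) + (-1)*(x₂:ℂ) + (-1)*(y₄:ℂ)*I + (-1)*(z:ℂ)*I, (-1)*(x₁:ℂ)*I + (-1)*(xp:ℂ) + (-1)*(y₂:ℂ)*I + (-1)*(y₅:ℂ);
    (1)*(x₃:ℂ) + (-1)*(xm:ℂ) + (-1)*(y₁:ℂ)*I + (-1)*(y₃:ℂ)*I, 0, (1)*(x₁:ℂ)*I + (-1)*(xp:ℂ) + (-1)*(y₂:ℂ)*I + (1)*(y₅:ℂ), (1)*(x₀:ℂ) + (1)*(x₂:ℂ) + (1)*(y₄:ℂ)*I + (-1)*(z:ℂ)*I] := by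
      simp only [xElem, map_add, _root_.map_smul, _root_.map_mul, hρ, AlgHom.commutes]
      rw [P01234, P0123, P0124, P0134, P0234, P1234, EmatE0, EmatE1, EmatE2, EmatE3, EmatE4,
        algebraMap_fin_four]
      repeat rw [smul_mat_fin_four]
      repeat rw [add_mat_fin_four]
      apply mat4_eq <;> push_cast <;> ring
    have ha : (ρ (xElem x₀ x₁ x₂ x₃ xp xm y₁ y₂ y₃ y₄ y₅ z)).det
        = (((qVal x₀ x₁ x₂ x₃ xp xm y₁ y₂ y₃ y₄ y₅ z : ℝ) : ℂ)
            - 2 * I * ((mVal x₀ x₁ x₂ x₃ xp xm y₁ y₂ y₃ y₄ y₅ z : ℝ) : ℂ)) ^ 2 := by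
      rw [hM, det4]
      simp only [qVal, mVal]
      push_cast
      linear_combination ((-2)*(x₀:ℂ)*(x₀:ℂ)*(y₄:ℂ)*(y₄:ℂ) + (2)*(x₀:ℂ)*(x₀:ℂ)*(z:ℂ)*(z:ℂ) + (2)*(x₂:ℂ)*(x₂:ℂ)*(y₄:ℂ)*(y₄:ℂ) + (-2)*(x₂:ℂ)*(x₂:ℂ)*(z:ℂ)*(z:ℂ) + (2)*(x₀:ℂ)*(x₀:ℂ)*(x₁:ℂ)*(x₁:ℂ) + (-2)*(x₀:ℂ)*(x₀:ℂ)*(y₂:ℂ)*(y₂:ℂ) + (-2)*(x₁:ℂ)*(x₁:ℂ)*(x₂:ℂ)*(x₂:ℂ) + (2)*(x₂:ℂ)*(x₂:ℂ)*(y₂:ℂ)*(y₂:ℂ) + (2)*(xp:ℂ)*(xp:ℂ)*(y₄:ℂ)*(y₄:ℂ) + (-2)*(y₄:ℂ)*(y₄:ℂ)*(y₅:ℂ)*(y₅:ℂ) + (-2)*(xp:ℂ)*(xp:ℂ)*(z:ℂ)*(z:ℂ) + (2)*(y₅:ℂ)*(y₅:ℂ)*(z:ℂ)*(z:ℂ)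 + (2)*(x₀:ℂ)*(x₀:ℂ)*(y₁:ℂ)*(y₁:ℂ) + (-2)*(x₀:ℂ)*(x₀:ℂ)*(y₃:ℂ)*(y₃:ℂ) + (-2)*(x₂:ℂ)*(x₂:ℂ)*(y₁:ℂ)*(y₁:ℂ) + (2)*(x₂:ℂ)*(x₂:ℂ)*(y₃:ℂ)*(y₃:ℂ) + (2)*(x₃:ℂ)*(x₃:ℂ)*(y₄:ℂ)*(y₄:ℂ) + (-2)*(xm:ℂ)*(xm:ℂ)*(y₄:ℂ)*(y₄:ℂ) + (-2)*(x₃:ℂ)*(x₃:ℂ)*(z:ℂ)*(z:ℂ) + (2)*(xm:ℂ)*(xm:ℂ)*(z:ℂ)*(z:ℂ) + (-2)*(x₁:ℂ)*(x₁:ℂ)*(xp:ℂ)*(xp:ℂ) + (2)*(x₁:ℂ)*(x₁:ℂ)*(y₅:ℂ)*(y₅:ℂ) + (2)*(xp:ℂ)*(xp:ℂ)*(y₂:ℂ)*(y₂:ℂ) + (-2)*(y₂:ℂ)*(y₂:ℂ)*(y₅:ℂ)*(y₅:ℂ) + (-2)*(x₁:ℂ)*(x₁:ℂ)*(x₃:ℂ)*(x₃:ℂ)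 + (2)*(x₁:ℂ)*(x₁:ℂ)*(xm:ℂ)*(xm:ℂ) + (-2)*(xp:ℂ)*(xp:ℂ)*(y₁:ℂ)*(y₁:ℂ) + (2)*(xp:ℂ)*(xp:ℂ)*(y₃:ℂ)*(y₃:ℂ) + (2)*(x₃:ℂ)*(x₃:ℂ)*(y₂:ℂ)*(y₂:ℂ) + (-2)*(xm:ℂ)*(xm:ℂ)*(y₂:ℂ)*(y₂:ℂ) + (2)*(y₁:ℂ)*(y₁:ℂ)*(y₅:ℂ)*(y₅:ℂ) + (-2)*(y₃:ℂ)*(y₃:ℂ)*(y₅:ℂ)*(y₅:ℂ) + (-2)*(x₃:ℂ)*(x₃:ℂ)*(y₁:ℂ)*(y₁:ℂ) + (2)*(x₃:ℂ)*(x₃:ℂ)*(y₃:ℂ)*(y₃:ℂ) + (2)*(xm:ℂ)*(xm:ℂ)*(y₁:ℂ)*(y₁:ℂ) + (-2)*(xm:ℂ)*(xm:ℂ)*(y₃:ℂ)*(y₃:ℂ) + (-1)*(y₄:ℂ)*(y₄:ℂ)*(y₄:ℂ)*(y₄:ℂ) + (2)*(y₄:ℂ)*(y₄:ℂ)*(z:ℂ)*(z:ℂ)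 + (-1)*(z:ℂ)*(z:ℂ)*(z:ℂ)*(z:ℂ) + (2)*(x₁:ℂ)*(x₁:ℂ)*(y₄:ℂ)*(y₄:ℂ) + (-2)*(y₂:ℂ)*(y₂:ℂ)*(y₄:ℂ)*(y₄:ℂ) + (-2)*(x₁:ℂ)*(x₁:ℂ)*(z:ℂ)*(z:ℂ) + (2)*(y₂:ℂ)*(y₂:ℂ)*(z:ℂ)*(z:ℂ) + (2)*(y₁:ℂ)*(y₁:ℂ)*(y₄:ℂ)*(y₄:ℂ) + (-2)*(y₃:ℂ)*(y₃:ℂ)*(y₄:ℂ)*(y₄:ℂ) + (-2)*(y₁:ℂ)*(y₁:ℂ)*(z:ℂ)*(z:ℂ) + (2)*(y₃:ℂ)*(y₃:ℂ)*(z:ℂ)*(z:ℂ) + (-1)*(x₁:ℂ)*(x₁:ℂ)*(x₁:ℂ)*(x₁:ℂ) + (2)*(x₁:ℂ)*(x₁:ℂ)*(y₂:ℂ)*(y₂:ℂ) + (-1)*(y₂:ℂ)*(y₂:ℂ)*(y₂:ℂ)*(y₂:ℂ) + (-2)*(x₁:ℂ)*(x₁:ℂ)*(y₁:ℂ)*(y₁:ℂ)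 + (2)*(x₁:ℂ)*(x₁:ℂ)*(y₃:ℂ)*(y₃:ℂ) + (2)*(y₁:ℂ)*(y₁:ℂ)*(y₂:ℂ)*(y₂:ℂ) + (-2)*(y₂:ℂ)*(y₂:ℂ)*(y₃:ℂ)*(y₃:ℂ) + (-1)*(y₁:ℂ)*(y₁:ℂ)*(y₁:ℂ)*(y₁:ℂ) + (2)*(y₁:ℂ)*(y₁:ℂ)*(y₃:ℂ)*(y₃:ℂ) + (-1)*(y₃:ℂ)*(y₃:ℂ)*(y₃:ℂ)*(y₃:ℂ) + (4)*(x₀:ℂ)*(y₄:ℂ)*(y₄:ℂ)*(z:ℂ)*I + (-4)*(x₀:ℂ)*(z:ℂ)*(z:ℂ)*(z:ℂ)*I + (4)*(x₂:ℂ)*(y₄:ℂ)*(y₄:ℂ)*(y₄:ℂ)*I + (-4)*(x₂:ℂ)*(y₄:ℂ)*(z:ℂ)*(z:ℂ)*I + (-4)*(x₀:ℂ)*(x₁:ℂ)*(x₁:ℂ)*(z:ℂ)*I + (4)*(x₀:ℂ)*(y₂:ℂ)*(y₂:ℂ)*(z:ℂ)*I + (-4)*(x₁:ℂ)*(x₁:ℂ)*(x₂:ℂ)*(y₄:ℂ)*I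 + (4)*(x₂:ℂ)*(y₂:ℂ)*(y₂:ℂ)*(y₄:ℂ)*I + (-4)*(x₁:ℂ)*(y₄:ℂ)*(y₄:ℂ)*(y₅:ℂ)*I + (4)*(xp:ℂ)*(y₂:ℂ)*(y₄:ℂ)*(y₄:ℂ)*I + (4)*(x₁:ℂ)*(y₅:ℂ)*(z:ℂ)*(z:ℂ)*I + (-4)*(xp:ℂ)*(y₂:ℂ)*(z:ℂ)*(z:ℂ)*I + (-4)*(x₀:ℂ)*(y₁:ℂ)*(y₁:ℂ)*(z:ℂ)*I + (4)*(x₀:ℂ)*(y₃:ℂ)*(y₃:ℂ)*(z:ℂ)*I + (-4)*(x₂:ℂ)*(y₁:ℂ)*(y₁:ℂ)*(y₄:ℂ)*I + (4)*(x₂:ℂ)*(y₃:ℂ)*(y₃:ℂ)*(y₄:ℂ)*I + (-4)*(x₃:ℂ)*(y₃:ℂ)*(y₄:ℂ)*(y₄:ℂ)*I + (-4)*(xm:ℂ)*(y₁:ℂ)*(y₄:ℂ)*(y₄:ℂ)*I + (4)*(x₃:ℂ)*(y₃:ℂ)*(z:ℂ)*(z:ℂ)*I + (4)*(xm:ℂ)*(y₁:ℂ)*(z:ℂ)*(z:ℂ)*I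 + (4)*(x₁:ℂ)*(x₁:ℂ)*(x₁:ℂ)*(y₅:ℂ)*I + (-4)*(x₁:ℂ)*(x₁:ℂ)*(xp:ℂ)*(y₂:ℂ)*I + (-4)*(x₁:ℂ)*(y₂:ℂ)*(y₂:ℂ)*(y₅:ℂ)*I + (4)*(xp:ℂ)*(y₂:ℂ)*(y₂:ℂ)*(y₂:ℂ)*I + (4)*(x₁:ℂ)*(x₁:ℂ)*(x₃:ℂ)*(y₃:ℂ)*I + (4)*(x₁:ℂ)*(x₁:ℂ)*(xm:ℂ)*(y₁:ℂ)*I + (4)*(x₁:ℂ)*(y₁:ℂ)*(y₁:ℂ)*(y₅:ℂ)*I + (-4)*(x₁:ℂ)*(y₃:ℂ)*(y₃:ℂ)*(y₅:ℂ)*I + (-4)*(xp:ℂ)*(y₁:ℂ)*(y₁:ℂ)*(y₂:ℂ)*I + (4)*(xp:ℂ)*(y₂:ℂ)*(y₃:ℂ)*(y₃:ℂ)*I + (-4)*(x₃:ℂ)*(y₂:ℂ)*(y₂:ℂ)*(y₃:ℂ)*I + (-4)*(xm:ℂ)*(y₁:ℂ)*(y₂:ℂ)*(y₂:ℂ)*I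 + (4)*(x₃:ℂ)*(y₁:ℂ)*(y₁:ℂ)*(y₃:ℂ)*I + (-4)*(x₃:ℂ)*(y₃:ℂ)*(y₃:ℂ)*(y₃:ℂ)*I + (4)*(xm:ℂ)*(y₁:ℂ)*(y₁:ℂ)*(y₁:ℂ)*I + (-4)*(xm:ℂ)*(y₁:ℂ)*(y₃:ℂ)*(y₃:ℂ)*I + (1)*(y₄:ℂ)*(y₄:ℂ)*(y₄:ℂ)*(y₄:ℂ)*I*I + (-2)*(y₄:ℂ)*(y₄:ℂ)*(z:ℂ)*(z:ℂ)*I*I + (1)*(z:ℂ)*(z:ℂ)*(z:ℂ)*(z:ℂ)*I*I + (-2)*(x₁:ℂ)*(x₁:ℂ)*(y₄:ℂ)*(y₄:ℂ)*I*I + (2)*(y₂:ℂ)*(y₂:ℂ)*(y₄:ℂ)*(y₄:ℂ)*I*I + (2)*(x₁:ℂ)*(x₁:ℂ)*(z:ℂ)*(z:ℂ)*I*I + (-2)*(y₂:ℂ)*(y₂:ℂ)*(z:ℂ)*(z:ℂ)*I*I + (-2)*(y₁:ℂ)*(y₁:ℂ)*(y₄:ℂ)*(y₄:ℂ)*I*I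 + (2)*(y₃:ℂ)*(y₃:ℂ)*(y₄:ℂ)*(y₄:ℂ)*I*I + (2)*(y₁:ℂ)*(y₁:ℂ)*(z:ℂ)*(z:ℂ)*I*I + (-2)*(y₃:ℂ)*(y₃:ℂ)*(z:ℂ)*(z:ℂ)*I*I + (1)*(x₁:ℂ)*(x₁:ℂ)*(x₁:ℂ)*(x₁:ℂ)*I*I + (-2)*(x₁:ℂ)*(x₁:ℂ)*(y₂:ℂ)*(y₂:ℂ)*I*I + (1)*(y₂:ℂ)*(y₂:ℂ)*(y₂:ℂ)*(y₂:ℂ)*I*I + (2)*(x₁:ℂ)*(x₁:ℂ)*(y₁:ℂ)*(y₁:ℂ)*I*I + (-2)*(x₁:ℂ)*(x₁:ℂ)*(y₃:ℂ)*(y₃:ℂ)*I*I + (-2)*(y₁:ℂ)*(y₁:ℂ)*(y₂:ℂ)*(y₂:ℂ)*I*I + (2)*(y₂:ℂ)*(y₂:ℂ)*(y₃:ℂ)*(y₃:ℂ)*I*I + (1)*(y₁:ℂ)*(y₁:ℂ)*(y₁:ℂ)*(y₁:ℂ)*I*I + (-2)*(y₁:ℂ)*(y₁:ℂ)*(y₃:ℂ)*(y₃:ℂ)*I*I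 + (1)*(y₃:ℂ)*(y₃:ℂ)*(y₃:ℂ)*(y₃:ℂ)*I*I) * Complex.I_sq
    refine ⟨ha, ?_⟩
    rw [ha, pow_eq_zero_iff two_ne_zero]
    constructor
    · intro h
      have h1 := congrArg Complex.re h
      have h2 := congrArg Complex.im h
      simp at h1 h2
      exact ⟨by linarith, by linarith⟩
    · rintro ⟨h1, h2⟩
      rw [h1, h2]
      simp
end

section
/- Let h = q + εp be a dual quaternion (q, p ∈ ℍ) such that t−h is a motion polynomial, i.e. h + h̃ ∈ ℝ and h·h̃ ∈ ℝ, and such that h − k̃ = h + k is not invertible in the dual quaternions (equivalently, its quaternion part q + k is zero). Then there exist real numbers a, b with h = −k + ε(a·i + b·j), where i, j, k are the quaternion units and ε the dual unit. Conversely, every h of this form satisfies all three conditions. -/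
open Polynomial

/-- The dual quaternions `DH = ℍ[ε] = DualNumber (Quaternion ℝ)`. -/
abbrev DH := DualNumber (Quaternion ℝ)

/-- Reversion of a dual quaternion `g = q + εp`: quaternion conjugation applied to both
parts, `g̃ = q̄ + εp̄`. -/
noncomputable def drev (g : DH) : DH :=
  TrivSqZeroExt.inl (star g.fst) + TrivSqZeroExt.inr (star g.snd)

/-- The quaternion unit `i`. -/
noncomputable def qi : Quaternion ℝ := ⟨0, 1, 0, 0⟩
/-- The quaternion unit `j`. -/
noncomputable def qj : Quaternion ℝ := ⟨0, 0, 1, 0⟩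
/-- The quaternion unit `k`. -/
noncomputable def qk : Quaternion ℝ := ⟨0, 0, 0, 1⟩

open TrivSqZeroExt DualNumber Quaternion in
lemma dh_eq_iff (x y : DH) : x = y ↔ x.fst = y.fst ∧ x.snd = y.snd :=
  ⟨fun h => by subst h; exact ⟨rfl, rfl⟩, fun ⟨h1, h2⟩ => TrivSqZeroExt.ext h1 h2⟩

open TrivSqZeroExt DualNumber Quaternion in
lemma stmt15_main (h : DH) :
    (((∃ r : ℝ, h + drev h = algebraMap ℝ DH r) ∧
        (∃ r : ℝ, h * drev h = algebraMap ℝ DH r) ∧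
        (h - drev (TrivSqZeroExt.inl qk)).fst = 0) ↔
      ∃ a b : ℝ, h = -(TrivSqZeroExt.inl qk)
        + DualNumber.eps * TrivSqZeroExt.inl (a • qi + b • qj)) := by
  simp only [drev, dh_eq_iff, fst_add, snd_add, fst_mul, DualNumber.snd_mul, fst_inl, snd_inl,
    fst_inr, snd_inr, fst_sub, fst_neg, snd_neg, algebraMap_eq_inl', fst_eps, snd_eps,
    fst_mk, snd_mk,
    Quaternion.ext_iff, QuaternionAlgebra.algebraMap_eq,
    Quaternion.re_add, Quaternion.imI_add, Quaternion.imJ_add, Quaternion.imK_add,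
    Quaternion.re_sub, Quaternion.imI_sub, Quaternion.imJ_sub, Quaternion.imK_sub,
    Quaternion.re_neg, Quaternion.imI_neg, Quaternion.imJ_neg, Quaternion.imK_neg,
    Quaternion.re_star, Quaternion.imI_star, Quaternion.imJ_star, Quaternion.imK_star,
    Quaternion.re_mul, Quaternion.imI_mul, Quaternion.imJ_mul, Quaternion.imK_mul,
    Quaternion.re_smul, Quaternion.imI_smul, Quaternion.imJ_smul, Quaternion.imK_smul,
    Quaternion.re_zero, Quaternion.imI_zero, Quaternion.imJ_zero, Quaternion.imK_zero,
    Quaternion.re_one, Quaternion.imI_one, Quaternion.imJ_one, Quaternion.imK_one,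
    zero_mul, mul_zero, one_mul, add_zero, zero_add, neg_zero, smul_zero, smul_eq_mul,
    sub_zero, mul_one, neg_neg, sub_neg_eq_add,
    Quaternion.algebraMap_def, Quaternion.re_coe, Quaternion.imI_coe, Quaternion.imJ_coe,
    Quaternion.imK_coe]
  generalize (TrivSqZeroExt.fst h).re = q0
  generalize (TrivSqZeroExt.fst h).imI = q1
  generalize (TrivSqZeroExt.fst h).imJ = q2
  generalize (TrivSqZeroExt.fst h).imK = q3
  generalize (TrivSqZeroExt.snd h).re = p0
  generalize (TrivSqZeroExt.snd h).imI = p1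
  generalize (TrivSqZeroExt.snd h).imJ = p2
  generalize (TrivSqZeroExt.snd h).imK = p3
  dsimp only [qi, qj, qk]
  simp only [zero_mul, mul_zero, one_mul, add_zero, zero_add, neg_zero, sub_zero,
    mul_one, neg_neg, sub_neg_eq_add]
  constructor
  · rintro ⟨⟨r1, -, hp0, -, -, -⟩, ⟨r2, -, hs0, hs1, hs2, hs3⟩, c0, c1, c2, c3⟩
    subst c0; subst c1; subst c2
    have c3' : q3 = -1 := by linarith
    subst c3'
    exact ⟨p1, p2, ⟨rfl, rfl, rfl, rfl⟩, by linarith, rfl, rfl, by linarith⟩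
  · rintro ⟨a, b, ⟨c0, c1, c2, c3⟩, d0, d1, d2, d3⟩
    subst c0; subst c1; subst c2; subst c3; subst d0; subst d1; subst d2; subst d3
    refine ⟨⟨0, by norm_num⟩, ⟨1, by norm_num⟩, by norm_num⟩

open TrivSqZeroExt in
lemma dh_not_isUnit_iff (x : DH) : ¬ IsUnit x ↔ x.fst = 0 := by
  rw [isUnit_iff_isUnit_fst, isUnit_iff_ne_zero, not_ne_iff]

/-- a dual quaternion `h` is non-invertible after subtracting `k̃`
exactly when the quaternion part of `h − k̃ = h + k` vanishes; moreover `h` satisfies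
`h + h̃ ∈ ℝ`, `h·h̃ ∈ ℝ` (so that `t−h` is a motion polynomial) and
`h − k̃` is non-invertible if and only if `h = −k + ε(a·i + b·j)` for some reals
`a, b`. -/
theorem stmt15 (h : DH) :
    (¬ IsUnit (h - drev (TrivSqZeroExt.inl qk)) ↔
      (h - drev (TrivSqZeroExt.inl qk)).fst = 0) ∧
    (((∃ r : ℝ, h + drev h = algebraMap ℝ DH r) ∧
        (∃ r : ℝ, h * drev h = algebraMap ℝ DH r) ∧
        ¬ IsUnit (h - drev (TrivSqZeroExt.inl qk))) ↔
      ∃ a b : ℝ, h = -(TrivSqZeroExt.inl qk)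
        + DualNumber.eps * TrivSqZeroExt.inl (a • qi + b • qj)) := by
  refine ⟨dh_not_isUnit_iff _, ?_⟩
  rw [dh_not_isUnit_iff]
  exact stmt15_main h
end
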